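/- Let ω be an infinite word over a finite alphabet A and k a positive integer. Define u R_k v iff u and v are Abelian equivalent and share a common prefix and common suffix of length min(|u|, k−1) (with u R_k v meaning u = v when |u| < k−1). Then k-Abelian equivalence implies R_k: if u ∼_k v then u R_k v. -/
import Mathlib


/-- Number of occurrences of `x` as a factor of `w`. -/
def occ {A : Type*} [DecidableEq A] (w x : List A) : ℕ :=
  ((List.range (w.length + 1)).filter (fun i => decide (x <+: w.drop i))).length

/-- `k`-Abelian equivalence. -/
def KAbEq {A : Type*} [DecidableEq A] (k : ℕ) (u v : List A) : Prop :=
  ∀ x : List A, x ≠ [] → x.length ≤ k → occ u x = occ v x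

/-- `u` is a factor of the infinite word `ω`. -/
def IsFactorOf {A : Type*} (u : List A) (ω : ℕ → A) : Prop :=
  ∃ i : ℕ, u = (List.range u.length).map fun j => ω (i + j)

/-- `ω` is ultimately periodic. -/
def UltimatelyPeriodic {A : Type*} (ω : ℕ → A) : Prop :=
  ∃ p : ℕ, 1 ≤ p ∧ ∃ N : ℕ, ∀ i ≥ N, ω (i + p) = ω i

/-- The setoid of `k`-Abelian equivalence on the factors of `ω` of length `n`. -/
def factorSetoid {A : Type*} [DecidableEq A] (ω : ℕ → A) (k n : ℕ) :
    Setoid {u : List A // u.length = n ∧ IsFactorOf u ω} where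
  r u v := KAbEq k u.1 v.1
  iseqv := ⟨fun _ _ _ _ => rfl, fun h x hx hxk => (h x hx hxk).symm,
    fun h₁ h₂ x hx hxk => (h₁ x hx hxk).trans (h₂ x hx hxk)⟩

/-- The `k`-Abelian complexity of `ω`: the number of `k`-Abelian classes of
factors of `ω` of length `n`. -/
noncomputable def kabComplexity {A : Type*} [DecidableEq A] (ω : ℕ → A) (k n : ℕ) : ℕ :=
  Nat.card (Quotient (factorSetoid ω k n))

lemma occ_cons {A : Type*} [DecidableEq A] (b : A) (w x : List A) :
    occ (b :: w) x = (if x <+: (b :: w) then 1 else 0) + occ w x := by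
  unfold occ
  rw [List.length_cons, List.range_succ_eq_map, List.filter_cons]
  simp only [List.drop_zero]
  rw [List.filter_map]
  by_cases hp : x <+: b :: w <;> simp [hp, Function.comp_def, List.drop_succ_cons, Nat.add_comm]

lemma occ_nil {A : Type*} [DecidableEq A] (x : List A) :
    occ [] x = if x = [] then 1 else 0 := by
  unfold occ
  by_cases hx : x = [] <;> simp [hx, List.prefix_nil]

lemma occ_singleton {A : Type*} [DecidableEq A] (w : List A) (a : A) :
    occ w [a] = w.count a := by
  induction w with
  | nil => simp [occ_nil]
  | cons b t ih =>
    rw [occ_cons, ih, List.count_cons]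
    have : [a] <+: b :: t ↔ a = b := by simp [List.cons_prefix_cons]
    simp only [this]
    by_cases hab : a = b
    · subst hab; simp [Nat.add_comm]
    · simp [hab, (Ne.symm hab : b ≠ a)]

lemma occ_left_ext {A : Type*} [Fintype A] [DecidableEq A] (w x : List A) :
    occ w x = (∑ a : A, occ w (a :: x)) + (if x <+: w then 1 else 0) := by
  induction w with
  | nil =>
    by_cases hx : x = [] <;> simp [occ_nil, hx]
  | cons b t ih =>
    simp only [occ_cons, ih, Finset.sum_add_distrib]
    have h1 : (∑ a : A, if a :: x <+: b :: t then 1 else 0) = (if x <+: t then 1 else 0) := by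
      have : ∀ a : A, (if a :: x <+: b :: t then 1 else 0)
          = (if a = b then (if x <+: t then 1 else 0) else 0) := by
        intro a
        by_cases hab : a = b <;> simp [List.cons_prefix_cons, hab]
      rw [Finset.sum_congr rfl fun a _ => this a, Finset.sum_ite_eq']
      simp
    omega

lemma occ_right_ext {A : Type*} [Fintype A] [DecidableEq A] (w x : List A) :
    occ w x = (∑ a : A, occ w (x ++ [a])) + (if x <:+ w then 1 else 0) := by
  induction w with
  | nil =>
    by_cases hx : x = [] <;> simp [occ_nil, hx, List.suffix_nil]
  | cons b t ih =>
    simp only [occ_cons, ih, Finset.sum_add_distrib]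
    have h1 : (∑ a : A, if x ++ [a] <+: b :: t then 1 else 0)
        + (if x = b :: t then 1 else 0) = (if x <+: b :: t then 1 else 0) := by
      by_cases hx : x = b :: t
      · subst hx
        have h2 : ∀ a : A, ¬ ((b :: t) ++ [a] <+: b :: t) := by
          intro a hcon
          have := hcon.length_le
          simp at this
        rw [if_pos (List.prefix_refl _), if_pos rfl]
        have : (∑ a : A, if (b :: t) ++ [a] <+: b :: t then 1 else 0) = 0 := by
          simp only [h2, if_false]; simp
        omega
      · simp only [if_neg hx]
        by_cases hp : x <+: b :: t
        · obtain ⟨r, hr⟩ := hp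
          match r, hr with
          | [], hr => exact absurd (by simpa using hr) hx
          | c :: s, hr =>
            have h3 : ∀ a : A, (x ++ [a] <+: b :: t) ↔ a = c := by
              intro a
              rw [← hr, List.prefix_append_right_inj]
              simp [List.cons_prefix_cons]
            have h4 : ∀ a : A, (if x ++ [a] <+: b :: t then 1 else 0)
                = (if a = c then 1 else 0) := by
              intro a; by_cases hac : a = c <;> simp [h3, hac]
            rw [Finset.sum_congr rfl fun a _ => h4 a, Finset.sum_ite_eq']
            simp [← hr, List.prefix_append]
        · have h5 : ∀ a : A, ¬ (x ++ [a] <+: b :: t) := fun a hcon =>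
            hp ((List.prefix_append x [a]).trans hcon)
          simp [h5, hp]
    have h2 : (if x <:+ b :: t then 1 else 0)
        = (if x = b :: t then 1 else 0) + (if x <:+ t then 1 else 0) := by
      by_cases hx : x = b :: t
      · have : ¬ x <:+ t := by
          intro hcon; have := hcon.length_le; subst hx; simp at this
        rw [hx] at this ⊢
        simp [this, List.suffix_cons_iff]
      · simp [hx, List.suffix_cons_iff]
    omega

lemma length_eq_sum_count {A : Type*} [Fintype A] [DecidableEq A] (l : List A) :
    l.length = ∑ a : A, l.count a := by
  induction l with
  | nil => simp
  | cons b t ih =>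
    simp only [List.count_cons, Finset.sum_add_distrib, List.length_cons, ← ih]
    simp

theorem stmt12 {A : Type*} [Fintype A] [DecidableEq A] (ω : ℕ → A) (k : ℕ) (hk : 1 ≤ k)
    (u v : List A) (hu : IsFactorOf u ω) (hv : IsFactorOf v ω)
    (h : KAbEq k u v) :
    (∀ a : A, u.count a = v.count a) ∧
      u.take (min u.length (k - 1)) = v.take (min v.length (k - 1)) ∧
      u.drop (u.length - min u.length (k - 1)) = v.drop (v.length - min v.length (k - 1)) := by
  have hcnt : ∀ a : A, u.count a = v.count a := by
    intro a
    have := h [a] (by simp) (by simpa using hk)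
    rwa [occ_singleton, occ_singleton] at this
  have hlen : u.length = v.length := by
    rw [length_eq_sum_count u, length_eq_sum_count v]
    exact Finset.sum_congr rfl fun a _ => hcnt a
  set m := min u.length (k - 1) with hm
  have hmu : m ≤ u.length := min_le_left _ _
  have hmk : m ≤ k - 1 := min_le_right _ _
  have hmv : min v.length (k - 1) = m := by rw [hm, hlen]
  have keyP : ∀ x : List A, x ≠ [] → x.length ≤ k - 1 → ((x <+: u) ↔ (x <+: v)) := by
    intro x hx hxk
    have e1 := h x hx (le_trans hxk (Nat.sub_le k 1))
    have e2 : (∑ a : A, occ u (a :: x)) = ∑ a : A, occ v (a :: x) :=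
      Finset.sum_congr rfl fun a _ => h (a :: x) (by simp) (by simp; omega)
    rw [occ_left_ext u x, occ_left_ext v x, e2] at e1
    by_cases h1 : x <+: u <;> by_cases h2 : x <+: v
    · exact iff_of_true h1 h2
    · exfalso; rw [if_pos h1, if_neg h2] at e1; omega
    · exfalso; rw [if_neg h1, if_pos h2] at e1; omega
    · exact iff_of_false h1 h2
  have keyS : ∀ x : List A, x ≠ [] → x.length ≤ k - 1 → ((x <:+ u) ↔ (x <:+ v)) := by
    intro x hx hxk
    have e1 := h x hx (le_trans hxk (Nat.sub_le k 1))
    have e2 : (∑ a : A, occ u (x ++ [a])) = ∑ a : A, occ v (x ++ [a]) :=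
      Finset.sum_congr rfl fun a _ => h (x ++ [a]) (by simp) (by simp; omega)
    rw [occ_right_ext u x, occ_right_ext v x, e2] at e1
    by_cases h1 : x <:+ u <;> by_cases h2 : x <:+ v
    · exact iff_of_true h1 h2
    · exfalso; rw [if_pos h1, if_neg h2] at e1; omega
    · exfalso; rw [if_neg h1, if_pos h2] at e1; omega
    · exact iff_of_false h1 h2
  refine ⟨hcnt, ?_, ?_⟩
  · rw [hmv]
    rcases Nat.eq_zero_or_pos m with h0 | h0
    · simp [h0]
    · set x := u.take m with hx
      have hxlen : x.length = m := by simp [hx, hmu]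
      have hxne : x ≠ [] := by
        intro hcon; rw [hcon] at hxlen; simp at hxlen; omega
      have hxv : x <+: v := (keyP x hxne (hxlen ▸ hmk)).mp (List.take_prefix m u)
      have := List.prefix_iff_eq_take.mp hxv
      rw [hxlen] at this
      exact this
  · rw [hmv]
    rcases Nat.eq_zero_or_pos m with h0 | h0
    · simp [h0, List.drop_length]
    · set x := u.drop (u.length - m) with hx
      have hxlen : x.length = m := by simp [hx]; omega
      have hxne : x ≠ [] := by
        intro hcon; rw [hcon] at hxlen; simp at hxlen; omega
      have hxv : x <:+ v := (keyS x hxne (hxlen ▸ hmk)).mp (List.drop_suffix _ u)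
      have := List.suffix_iff_eq_drop.mp hxv
      rw [hxlen] at this
      exact this
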